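/- arXiv:nlin/0405029 — 8 statements merged into one kernel-verified Lean document; each statement's English description precedes it below -/
import Mathlib

section
/- Let f : ℝ → ℝ be differentiable, and let b, c ∈ ℝ with b ≠ 0 be constants such that every z ∈ ℝ with f(z) = c satisfies f'(z) = b. Then the equation f(z) = c has at most one solution z ∈ ℝ. -/
/-! The function `g = b * (f - c)` has the same zeros as `f - c` and derivative `b ^ 2 > 0` at
each of them, so `g` crosses every zero upwards: negative just left of it, positive just right.
Given zeros `z₁ < z₂`, pick `p` just right of `z₁` with `g p > 0` and let `w` be the first zero
in `[p, z₂]`. Then `g < 0` just left of `w`, and the intermediate value theorem yields a zero in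
`(p, w)`, contradicting the choice of `w`. -/

open Filter Set Topology SignType

section SignCrossing

variable {g : ℝ → ℝ} {x₀ : ℝ}

lemma eventually_pos_right_of_sign_eq (h : ∀ᶠ x in 𝓝 x₀, sign (g x) = sign (x - x₀)) :
    ∀ᶠ x in 𝓝[>] x₀, 0 < g x := by
  filter_upwards [nhdsWithin_le_nhds h, self_mem_nhdsWithin] with x hx (hx₀ : x₀ < x)
  rwa [← sign_eq_one_iff, hx, sign_eq_one_iff, sub_pos]

lemma eventually_neg_left_of_sign_eq (h : ∀ᶠ x in 𝓝 x₀, sign (g x) = sign (x - x₀)) :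
    ∀ᶠ x in 𝓝[<] x₀, g x < 0 := by
  filter_upwards [nhdsWithin_le_nhds h, self_mem_nhdsWithin] with x hx (hx₀ : x < x₀)
  rwa [← sign_eq_neg_one_iff, hx, sign_eq_neg_one_iff, sub_neg]

lemma not_lt_of_sign_crossing (hg : Continuous g)
    (hcross : ∀ z, g z = 0 → ∀ᶠ x in 𝓝 z, sign (g x) = sign (x - z))
    {z₁ z₂ : ℝ} (h₁ : g z₁ = 0) (h₂ : g z₂ = 0) : ¬ z₁ < z₂ := by
  intro hlt
  obtain ⟨p, hgp, hpz₂⟩ : ∃ p, 0 < g p ∧ p < z₂ :=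
    ((eventually_pos_right_of_sign_eq (hcross z₁ h₁)).and
      (Ioo_mem_nhdsGT hlt)).exists.imp fun p hp => ⟨hp.1, hp.2.2⟩
  set S := Icc p z₂ ∩ g ⁻¹' {0}
  have hS : IsClosed S := isClosed_Icc.inter (isClosed_singleton.preimage hg)
  have hSne : S.Nonempty := ⟨z₂, ⟨hpz₂.le, le_rfl⟩, h₂⟩
  have hSbdd : BddBelow S := ⟨p, fun x hx => hx.1.1⟩
  obtain ⟨⟨hpw_le, hwz₂⟩, hgw⟩ := hS.csInf_mem hSne hSbdd
  set w := sInf S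
  have hpw : p < w := hpw_le.lt_of_ne fun h => hgp.ne' (h ▸ hgw)
  obtain ⟨q, hgq, hpq, hqw⟩ : ∃ q, g q < 0 ∧ p < q ∧ q < w :=
    ((eventually_neg_left_of_sign_eq (hcross w hgw)).and
      (Ioo_mem_nhdsLT hpw)).exists.imp fun q hq => ⟨hq.1, hq.2⟩
  obtain ⟨r, ⟨hpr, hrq⟩, hgr⟩ :=
    intermediate_value_Icc' hpq.le hg.continuousOn ⟨hgq.le, hgp.le⟩
  have : w ≤ r := csInf_le hSbdd ⟨⟨hpr, by linarith⟩, hgr⟩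
  linarith

lemma subsingleton_zeros_of_deriv_pos (hg : Continuous g)
    (hderiv : ∀ z, g z = 0 → 0 < deriv g z) : (g ⁻¹' {0}).Subsingleton := by
  have hcross z (hz : g z = 0) : ∀ᶠ x in 𝓝 z, sign (g x) = sign (x - z) :=
    eventually_nhdsWithin_sign_eq_of_deriv_pos (hderiv z hz) hz
  intro z₁ h₁ z₂ h₂
  exact le_antisymm (not_lt.1 (not_lt_of_sign_crossing hg hcross h₂ h₁))
    (not_lt.1 (not_lt_of_sign_crossing hg hcross h₁ h₂))

end SignCrossing

/-- Lemma 2.1 (lemma `cut`): if `f` is differentiable and every solution of `f z = c`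
has derivative `b ≠ 0`, then `f z = c` has at most one solution. -/
theorem rotating_waves_stmt_0 (f : ℝ → ℝ) (hf : Differentiable ℝ f)
    (b c : ℝ) (hb : b ≠ 0) (hder : ∀ z : ℝ, f z = c → deriv f z = b) :
    ∀ z₁ z₂ : ℝ, f z₁ = c → f z₂ = c → z₁ = z₂ := by
  set g : ℝ → ℝ := fun x => b * (f x - c)
  have hzero {z} : g z = 0 ↔ f z = c := by simp [g, hb, sub_eq_zero]
  have hderiv z (hz : g z = 0) : 0 < deriv g z := by
    have hg : HasDerivAt g (b * deriv f z) z := ((hf z).hasDerivAt.sub_const c).const_mul b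
    rw [hg.deriv, hder z (hzero.1 hz)]
    exact mul_self_pos.2 hb
  intro z₁ z₂ h₁ h₂
  exact subsingleton_zeros_of_deriv_pos
    (continuous_const.mul (hf.continuous.sub continuous_const)) hderiv (hzero.2 h₁) (hzero.2 h₂)
end

section
/- Let β ∈ ℝ, g > 0, λ ∈ ℝ, let R : ℝ → ℝ be any function, and let φ : ℝ → ℝ be differentiable with φ'(z) = λ h(φ(z)) + λ g R(z) w(φ(z)) for all z ∈ ℝ, φ(z + 2π) = φ(z) + 2π for all z ∈ ℝ, and φ(0) = π. Then π < φ(z) < 3π for all z ∈ (0, 2π), and −π < φ(z) < π for all z ∈ (−2π, 0). -/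
/-!
Where `cos φ = -1`, i.e. on the levels `φ ≡ π (mod 2π)`, the weight `w` vanishes and `h = 2`, so
there `φ' = 2λ` whatever `R` is. Periodicity gives `φ(2π) - φ(0) = 2π > 0`, which forces `λ > 0`;
hence `φ` can cross each of the levels `-π, π, 3π` only upwards, and it takes these values at
`-2π, 0, 2π` respectively.
-/

/-- `h(θ) = 1 - cos θ + β(1 + cos θ)`. -/
noncomputable def hTheta (β θ : ℝ) : ℝ := 1 - Real.cos θ + β * (1 + Real.cos θ)

/-- `w(θ) = 1 + cos θ`. -/
noncomputable def wTheta (θ : ℝ) : ℝ := 1 + Real.cos θ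

open Real Set Filter Topology

section LevelCrossing

variable {f f' : ℝ → ℝ} {a c : ℝ}

theorem lt_apply_of_deriv_pos_on_level (hf : ∀ x, HasDerivAt f (f' x) x) (ha : f a = c)
    (hc : ∀ x, f x = c → 0 < f' x) {z : ℝ} (hz : a < z) : c < f z := by
  have hle : ∀ x, a ≤ x → c ≤ f x := fun x hx =>
    image_le_of_deriv_right_lt_deriv_boundary' (f := fun _ => c) (f' := 0) continuousOn_const
      (fun _ _ => hasDerivWithinAt_const _ _ _) ha.ge
      (continuous_iff_continuousAt.2 fun x => (hf x).continuousAt).continuousOn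
      (fun x _ => (hf x).hasDerivWithinAt) (fun x _ hx => hc x hx.symm) ⟨hx, le_rfl⟩
  refine (hle z hz.le).lt_of_ne fun hfz => (hc z hfz.symm).ne' ?_
  have hmin : IsLocalMin f z :=
    mem_of_superset (Ioi_mem_nhds hz) fun x hx => hfz ▸ hle x (le_of_lt hx)
  exact hmin.hasDerivAt_eq_zero (hf z)

theorem apply_lt_of_deriv_pos_on_level (hf : ∀ x, HasDerivAt f (f' x) x) (ha : f a = c)
    (hc : ∀ x, f x = c → 0 < f' x) {z : ℝ} (hz : z < a) : f z < c := by
  have hreflect : ∀ x, HasDerivAt (fun x => -f (-x)) (f' (-x)) x := fun x => by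
    have := ((hf (-x)).comp x (hasDerivAt_neg x)).neg
    rwa [mul_neg_one, neg_neg] at this
  have := lt_apply_of_deriv_pos_on_level hreflect (a := -a) (c := -c) (by simp [ha])
    (fun x hx => hc (-x) (neg_inj.1 hx)) (neg_lt_neg hz)
  simpa using this

end LevelCrossing

theorem hTheta_of_cos_eq_neg_one {β θ : ℝ} (hθ : cos θ = -1) : hTheta β θ = 2 := by
  rw [hTheta, hθ]; ring

theorem wTheta_of_cos_eq_neg_one {θ : ℝ} (hθ : cos θ = -1) : wTheta θ = 0 := by
  rw [wTheta, hθ]; ring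

section TravellingWave

variable {β g lam : ℝ} {R φ : ℝ → ℝ}

theorem deriv_eq_of_cos_eq_neg_one
    (hode : ∀ z, deriv φ z = lam * hTheta β (φ z) + lam * g * R z * wTheta (φ z))
    {z : ℝ} (hz : cos (φ z) = -1) : deriv φ z = 2 * lam := by
  rw [hode, hTheta_of_cos_eq_neg_one hz, wTheta_of_cos_eq_neg_one hz]; ring

theorem lam_pos_of_travelling_wave (hφ : Differentiable ℝ φ)
    (hode : ∀ z, deriv φ z = lam * hTheta β (φ z) + lam * g * R z * wTheta (φ z))
    (hper : ∀ z, φ (z + 2 * π) = φ z + 2 * π) (h0 : φ 0 = π) : 0 < lam := by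
  have h2π := hper 0
  rw [zero_add, h0] at h2π
  rcases lt_trichotomy lam 0 with hneg | rfl | hpos
  · have hcross : ∀ x, -φ x = -π → 0 < -deriv φ x := fun x hx => by
      rw [deriv_eq_of_cos_eq_neg_one hode (by rw [neg_inj.1 hx, cos_pi])]
      linarith
    have : -π < -φ (2 * π) := lt_apply_of_deriv_pos_on_level
      (fun x => (hφ x).hasDerivAt.neg) (by simp [h0]) hcross two_pi_pos
    linarith [pi_pos]
  · have hconst := is_const_of_deriv_eq_zero hφ (fun z => by simp [hode z]) (2 * π) 0
    linarith [pi_pos]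
  · exact hpos

end TravellingWave

theorem rotating_waves_stmt_3_general (β g lam : ℝ)
    (R : ℝ → ℝ) (φ : ℝ → ℝ) (hφ : Differentiable ℝ φ)
    (hode : ∀ z : ℝ, deriv φ z
      = lam * hTheta β (φ z) + lam * g * R z * wTheta (φ z))
    (hper : ∀ z : ℝ, φ (z + 2 * Real.pi) = φ z + 2 * Real.pi)
    (h0 : φ 0 = Real.pi) :
    (∀ z ∈ Set.Ioo (0 : ℝ) (2 * Real.pi), Real.pi < φ z ∧ φ z < 3 * Real.pi) ∧
    (∀ z ∈ Set.Ioo (-(2 * Real.pi)) (0 : ℝ), -Real.pi < φ z ∧ φ z < Real.pi) := by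
  have hlam := lam_pos_of_travelling_wave hφ hode hper h0
  have hderiv : ∀ x, HasDerivAt φ (deriv φ x) x := fun x => (hφ x).hasDerivAt
  have hcross : ∀ c, cos c = -1 → ∀ x, φ x = c → 0 < deriv φ x := fun c hc x hx => by
    rw [deriv_eq_of_cos_eq_neg_one hode (hx ▸ hc)]
    linarith
  have h2π : φ (2 * π) = 3 * π := by
    have := hper 0
    rw [zero_add, h0] at this
    linarith
  have hm2π : φ (-(2 * π)) = -π := by
    have := hper (-(2 * π))
    rw [neg_add_cancel, h0] at this
    linarith
  have hcos3π : cos (3 * π) = -1 := by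
    rw [show 3 * π = π + 2 * π by ring, cos_add_two_pi, cos_pi]
  have hcrossπ := hcross π cos_pi
  exact ⟨fun z hz => ⟨lt_apply_of_deriv_pos_on_level hderiv h0 hcrossπ hz.1,
      apply_lt_of_deriv_pos_on_level hderiv h2π (hcross _ hcos3π) hz.2⟩,
    fun z hz => ⟨lt_apply_of_deriv_pos_on_level hderiv hm2π (hcross _ (by simp)) hz.1,
      apply_lt_of_deriv_pos_on_level hderiv h0 hcrossπ hz.2⟩⟩

/-- Lemma 3.1 (lemma `one`): for any solution of the travelling-wave equation with winding
number `m = 1` and `φ(0) = π`, one has `π < φ(z) < 3π` on `(0, 2π)` and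
`-π < φ(z) < π` on `(-2π, 0)`. -/
theorem rotating_waves_stmt_3 (β g lam : ℝ) (hg : 0 < g)
    (R : ℝ → ℝ) (φ : ℝ → ℝ) (hφ : Differentiable ℝ φ)
    (hode : ∀ z : ℝ, deriv φ z
      = lam * hTheta β (φ z) + lam * g * R z * wTheta (φ z))
    (hper : ∀ z : ℝ, φ (z + 2 * Real.pi) = φ z + 2 * Real.pi)
    (h0 : φ 0 = Real.pi) :
    (∀ z ∈ Set.Ioo (0 : ℝ) (2 * Real.pi), Real.pi < φ z ∧ φ z < 3 * Real.pi) ∧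
    (∀ z ∈ Set.Ioo (-(2 * Real.pi)) (0 : ℝ), -Real.pi < φ z ∧ φ z < Real.pi) :=
  rotating_waves_stmt_3_general β g lam R φ hφ hode hper h0
end

section
/- Let β ∈ ℝ, g > 0, λ ∈ ℝ, let R : ℝ → ℝ be any function, and let φ : ℝ → ℝ be differentiable with φ'(z) = λ h(φ(z)) + λ g R(z) w(φ(z)) for all z ∈ ℝ, φ(z + 2π) = φ(z) + 2π for all z ∈ ℝ, and φ(0) = π. Then λ > 0. -/
/-- Lemma 3.3 (lemma `lampos`): any rotating wave with winding number `m = 1` has `λ > 0`. -/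
theorem rotating_waves_stmt_4 (β g lam : ℝ) (hg : 0 < g)
    (R : ℝ → ℝ) (φ : ℝ → ℝ) (hφ : Differentiable ℝ φ)
    (hode : ∀ z : ℝ, deriv φ z
      = lam * hTheta β (φ z) + lam * g * R z * wTheta (φ z))
    (hper : ∀ z : ℝ, φ (z + 2 * Real.pi) = φ z + 2 * Real.pi)
    (h0 : φ 0 = Real.pi) :
    0 < lam := by
  have hπ := Real.pi_pos
  by_contra hlam
  push_neg at hlam
  have hcont : Continuous φ := hφ.continuous
  rcases eq_or_lt_of_le hlam with hlam0 | hlamneg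
  · -- lam = 0 : φ constant, contradiction with periodicity shift
    have hderiv0 : ∀ z, deriv φ z = 0 := by
      intro z; rw [hode z, hlam0]; ring
    have hc := is_const_of_deriv_eq_zero hφ hderiv0 (2 * Real.pi) 0
    have := hper 0
    rw [zero_add, hc] at this
    linarith
  · -- lam < 0 : first time φ hits 3π
    have h2π : φ (2 * Real.pi) = 3 * Real.pi := by
      have := hper 0; rw [zero_add, h0] at this; linarith
    set S : Set ℝ := Set.Icc 0 (2 * Real.pi) ∩ φ ⁻¹' {3 * Real.pi} with hS
    have hSne : S.Nonempty := ⟨2 * Real.pi, ⟨by constructor <;> linarith, by simpa⟩⟩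
    have hSclosed : IsClosed S :=
      isClosed_Icc.inter (isClosed_singleton.preimage hcont)
    have hSbdd : BddBelow S := ⟨0, fun x hx => hx.1.1⟩
    set t := sInf S with ht
    have htS : t ∈ S := hSclosed.csInf_mem hSne hSbdd
    have hφt : φ t = 3 * Real.pi := htS.2
    have ht0 : 0 < t := by
      rcases lt_or_eq_of_le htS.1.1 with h | h
      · exact h
      · exfalso; rw [← h, h0] at hφt; linarith
    have ht2π : t ≤ 2 * Real.pi := htS.1.2
    -- φ z < 3π for z ∈ [0, t)
    have hbelow : ∀ z, 0 ≤ z → z < t → φ z < 3 * Real.pi := by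
      intro z hz0 hzt
      by_contra hge
      push_neg at hge
      have hsub := intermediate_value_Icc hz0 hcont.continuousOn
      have hmem : (3 : ℝ) * Real.pi ∈ Set.Icc (φ 0) (φ z) := by
        rw [h0]; exact ⟨by linarith, hge⟩
      obtain ⟨c, hc, hφc⟩ := hsub hmem
      have hcS : c ∈ S := ⟨⟨hc.1, le_trans hc.2 (le_of_lt (lt_of_lt_of_le hzt ht2π))⟩, hφc⟩
      have : t ≤ c := csInf_le hSbdd hcS
      linarith [hc.2]
    -- derivative at t equals 2 * lam
    have hcos3π : Real.cos (3 * Real.pi) = -1 := by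
      have : (3 : ℝ) * Real.pi = Real.pi + 2 * Real.pi := by ring
      rw [this, Real.cos_add_two_pi, Real.cos_pi]
    have hdt : deriv φ t = 2 * lam := by
      rw [hode t, hφt]
      simp [hTheta, wTheta, hcos3π]; ring
    -- derivative at t is nonneg (left approach)
    have hHD : HasDerivAt φ (deriv φ t) t := (hφ t).hasDerivAt
    have htend : Filter.Tendsto (slope φ t) (nhdsWithin t (Set.Ioo 0 t)) (nhds (deriv φ t)) := by
      have := hasDerivAt_iff_tendsto_slope.mp hHD
      refine this.mono_left (nhdsWithin_mono t ?_)
      intro z hz; exact ne_of_lt hz.2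
    have hnb : (nhdsWithin t (Set.Ioo 0 t)).NeBot := right_nhdsWithin_Ioo_neBot ht0
    have hev : ∀ᶠ z in nhdsWithin t (Set.Ioo 0 t), 0 ≤ slope φ t z := by
      refine eventually_nhdsWithin_of_forall ?_
      intro z hz
      have hlt := hbelow z hz.1.le hz.2
      rw [slope_def_field]
      refine div_nonneg_iff.mpr (Or.inr ⟨by linarith [hφt ▸ hlt], by linarith [hz.2]⟩)
    have h0le : 0 ≤ deriv φ t := ge_of_tendsto htend hev
    rw [hdt] at h0le
    linarith
end

section
/- Let β ∈ ℝ, g > 0, λ ∈ ℝ with λ ≠ 0, let R : ℝ → ℝ be any function, and let φ : ℝ → ℝ be differentiable with φ'(z) = λ h(φ(z)) + λ g R(z) w(φ(z)) for all z ∈ ℝ and φ(z + 2π) = φ(z) for all z ∈ ℝ. Then φ(z) ≠ (2l + 1)π for all z ∈ ℝ and all l ∈ ℤ. -/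
lemma no_double_zero (f : ℝ → ℝ) (hf : Differentiable ℝ f) (a b : ℝ) (hab : a < b)
    (ha : f a = 0) (hb : f b = 0) (hd : ∀ z, f z = 0 → 0 < deriv f z) : False := by
  have hda : 0 < deriv f a := hd a ha
  have hslope : Filter.Tendsto (slope f a) (nhdsWithin a {a}ᶜ) (nhds (deriv f a)) :=
    hasDerivAt_iff_tendsto_slope.1 (hf a).hasDerivAt
  -- find z₁ ∈ (a, b) with f z₁ > 0
  have h1 : ∀ᶠ x in nhdsWithin a (Set.Ioi a), 0 < slope f a x :=
    (hslope.eventually (eventually_gt_nhds hda)).filter_mono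
      (nhdsWithin_mono a (fun x hx => ne_of_gt hx))
  have h2 : ∀ᶠ x in nhdsWithin a (Set.Ioi a), x ∈ Set.Ioo a b :=
    Ioo_mem_nhdsGT_of_mem ⟨le_refl a, hab⟩
  obtain ⟨z₁, hz₁s, hz₁m⟩ := (h1.and h2).exists
  have hz₁pos : 0 < f z₁ := by
    have hs : slope f a z₁ = f z₁ / (z₁ - a) := by simp [slope_def_field, ha]
    rw [hs] at hz₁s
    rcases div_pos_iff.mp hz₁s with ⟨h, _⟩ | ⟨_, h⟩
    · exact h
    · linarith [hz₁m.1]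
  -- first zero after z₁
  set S : Set ℝ := {t | f t = 0} ∩ Set.Icc z₁ b with hS
  have hSne : S.Nonempty := ⟨b, hb, le_of_lt hz₁m.2, le_refl b⟩
  have hSclosed : IsClosed S :=
    (isClosed_singleton.preimage hf.continuous).inter isClosed_Icc
  have hSbdd : BddBelow S := ⟨z₁, fun t ht => ht.2.1⟩
  set t₀ := sInf S with ht₀
  have ht₀S : t₀ ∈ S := hSclosed.csInf_mem hSne hSbdd
  have hft₀ : f t₀ = 0 := ht₀S.1
  have hz₁t₀ : z₁ < t₀ := lt_of_le_of_ne ht₀S.2.1 (by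
    intro h; rw [← h] at hft₀; linarith)
  have hpos : ∀ t ∈ Set.Ico z₁ t₀, 0 < f t := by
    intro t ⟨htz, htt⟩
    by_contra hle
    push_neg at hle
    have hsub : Set.Icc (f t) (f z₁) ⊆ f '' Set.Icc z₁ t :=
      intermediate_value_Icc' htz hf.continuous.continuousOn
    obtain ⟨s, hsm, hs0⟩ := hsub ⟨hle, le_of_lt hz₁pos⟩
    have hsS : s ∈ S := ⟨hs0, hsm.1, le_trans hsm.2 (le_trans (le_of_lt htt) ht₀S.2.2)⟩
    have := csInf_le hSbdd hsS
    linarith [hsm.2]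
  -- slope from the left at t₀ is ≤ 0, contradicting deriv > 0
  have hdt₀ : 0 < deriv f t₀ := hd t₀ hft₀
  have hslope₀ : Filter.Tendsto (slope f t₀) (nhdsWithin t₀ (Set.Iio t₀))
      (nhds (deriv f t₀)) :=
    (hasDerivAt_iff_tendsto_slope.1 (hf t₀).hasDerivAt).mono_left
      (nhdsWithin_mono t₀ (fun x hx => ne_of_lt hx))
  have hev : ∀ᶠ x in nhdsWithin t₀ (Set.Iio t₀), slope f t₀ x ≤ 0 := by
    filter_upwards [Ioo_mem_nhdsLT_of_mem ⟨hz₁t₀, le_refl t₀⟩] with x hx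
    have hfx : 0 < f x := hpos x ⟨le_of_lt hx.1, hx.2⟩
    have hs : slope f t₀ x = f x / (x - t₀) := by simp [slope_def_field, hft₀]
    rw [hs]
    exact le_of_lt (div_neg_of_pos_of_neg hfx (by linarith [hx.2]))
  have : deriv f t₀ ≤ 0 := le_of_tendsto hslope₀ hev
  linarith

/-- Claim (2.13) in the proof of Lemma 2.3 (lemma `mz`): for a wave with winding number
`m = 0` and `λ ≠ 0`, the profile `φ` never takes the values `(2l + 1)π`, `l ∈ ℤ`. -/
theorem rotating_waves_stmt_5 (β g lam : ℝ) (hg : 0 < g) (hlam : lam ≠ 0)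
    (R : ℝ → ℝ) (φ : ℝ → ℝ) (hφ : Differentiable ℝ φ)
    (hode : ∀ z : ℝ, deriv φ z
      = lam * hTheta β (φ z) + lam * g * R z * wTheta (φ z))
    (hper : ∀ z : ℝ, φ (z + 2 * Real.pi) = φ z) :
    ∀ z : ℝ, ∀ l : ℤ, φ z ≠ (2 * (l : ℝ) + 1) * Real.pi := by
  intro z₀ l hz
  set c : ℝ := (2 * (l : ℝ) + 1) * Real.pi with hc
  have hcos : Real.cos c = -1 := by
    have hceq : c = (l : ℝ) * (2 * Real.pi) + Real.pi := by rw [hc]; ring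
    rw [hceq]; exact Real.cos_int_mul_two_pi_add_pi l
  have hderiv : ∀ z, φ z = c → deriv φ z = 2 * lam := by
    intro z hzc
    rw [hode z, hzc]
    simp only [hTheta, wTheta, hcos]
    ring
  have hzlt : z₀ < z₀ + 2 * Real.pi := by linarith [Real.pi_pos]
  rcases hlam.lt_or_gt with hneg | hpos
  · refine no_double_zero (fun z => c - φ z) (by fun_prop) z₀ (z₀ + 2 * Real.pi) hzlt
      (by simp [hz]) (by simp [hper z₀, hz]) ?_
    intro z hz0
    have hφz : φ z = c := by linarith [sub_eq_zero.mp hz0]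
    rw [deriv_const_sub, hderiv z hφz]
    linarith
  · refine no_double_zero (fun z => φ z - c) (by fun_prop) z₀ (z₀ + 2 * Real.pi) hzlt
      (by simp [hz]) (by simp [hper z₀, hz]) ?_
    intro z hz0
    have hφz : φ z = c := sub_eq_zero.mp hz0
    rw [deriv_sub_const, hderiv z hφz]
    linarith
end

section
/- Let c ≥ 0 and β < 0. Then f_{c,β} is positive and convex on (0, ∞), f_{c,β}(λ) → ∞ as λ → 0⁺, and f_{c,β}(λ) → ∞ as λ → ∞. -/
/-- `ρ_c(λ) = (e^{2πλ} - 1)/(e^{2πλ + c/2} - 1)`. -/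
noncomputable def rhoC (c lam : ℝ) : ℝ :=
  (Real.exp (2 * Real.pi * lam) - 1) / (Real.exp (2 * Real.pi * lam + c / 2) - 1)

/-- `f_{c,β}(λ) = (1 - 4βλ²)/(2λ ρ_c(λ))`. -/
noncomputable def fCB (c β lam : ℝ) : ℝ := (1 - 4 * β * lam ^ 2) / (2 * lam * rhoC c lam)

/-!
With `D = e^{c/2} ≥ 1` and `E = e^{2πλ}` one has `1/ρ_c = D + (D - 1)/(E - 1)`, so
`f_{c,β}(λ) = D (1/(2λ) - 2βλ) + (D - 1)/(2π) · (1/(2λ²) - 2β) · B(2πλ)` with `B(x) = x/(eˣ - 1)`.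
For `β < 0` the first term is positive, convex and tends to `∞` at both ends, and it bounds `f`
from below. The second term is a product of two nonnegative, convex, antitone functions, hence
convex. Convexity of `B` comes down to `2(eˣ - 1) ≤ x(eˣ + 1)`, i.e. `tanh(x/2) ≤ x/2`, and its
monotonicity to the monotonicity of the secant slopes `(eˣ - 1)/x` of `exp`.
-/

open Set Filter Real
open scoped Topology

lemma two_mul_exp_sub_one_le {x : ℝ} (hx : 0 ≤ x) : 2 * (exp x - 1) ≤ x * (exp x + 1) := by
  set g : ℝ → ℝ := fun t => t * (exp t + 1) - 2 * (exp t - 1)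
  have hg : ∀ t, HasDerivAt g (t * exp t - exp t + 1) t := fun t =>
    (((hasDerivAt_id t).mul ((hasDerivAt_exp t).add_const 1)).sub
      (((hasDerivAt_exp t).sub_const 1).const_mul 2)).congr_deriv (by simp only [id]; ring)
  -- `g' t = exp t * (t - 1 + exp (-t))` and `1 - t ≤ exp (-t)`
  have hg' : ∀ t, 0 ≤ t * exp t - exp t + 1 := fun t => by
    have h := mul_le_mul_of_nonneg_left (add_one_le_exp (-t)) (exp_pos t).le
    rw [← exp_add, add_neg_cancel, exp_zero] at h
    linarith
  have := monotone_of_deriv_nonneg (fun t => (hg t).differentiableAt)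
    (fun t => (hg t).deriv ▸ hg' t) hx
  simpa [g] using this

lemma exp_sub_one_pos {x : ℝ} (hx : 0 < x) : 0 < exp x - 1 :=
  sub_pos.2 (one_lt_exp_iff.2 hx)

lemma div_exp_sub_one_pos {x : ℝ} (hx : 0 < x) : 0 < x / (exp x - 1) :=
  div_pos hx (exp_sub_one_pos hx)

lemma convexOn_div_exp_sub_one : ConvexOn ℝ (Ioi 0) fun x => x / (exp x - 1) := by
  have hu (x : ℝ) : HasDerivAt (fun x => exp x - 1) (exp x) x := (hasDerivAt_exp x).sub_const 1
  refine convexOn_of_hasDerivWithinAt2_nonneg (convex_Ioi 0)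
    (f' := fun x => (exp x - 1 - x * exp x) / (exp x - 1) ^ 2)
    (f'' := fun x => exp x * (x * (exp x + 1) - 2 * (exp x - 1)) / (exp x - 1) ^ 3) ?_ ?_ ?_ ?_
  · exact fun x hx => ((hasDerivAt_id x).div (hu x)
      (exp_sub_one_pos hx).ne').continuousAt.continuousWithinAt
  · rw [interior_Ioi]
    intro x hx
    exact ((hasDerivAt_id x).div (hu x) (exp_sub_one_pos hx).ne').hasDerivWithinAt.congr_deriv
      (by simp only [id]; ring)
  · rw [interior_Ioi]
    intro x hx
    have hne := (exp_sub_one_pos hx).ne'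
    exact ((((hu x).sub ((hasDerivAt_id x).mul (hasDerivAt_exp x)))).div ((hu x).pow 2)
      (pow_ne_zero 2 hne)).hasDerivWithinAt.congr_deriv <| by
        simp only [Pi.sub_apply, Pi.mul_apply, Pi.pow_apply, id]; field_simp; ring
  · rw [interior_Ioi]
    intro x hx
    exact div_nonneg (mul_nonneg (exp_pos x).le (sub_nonneg.2 (two_mul_exp_sub_one_le hx.le)))
      (pow_pos (exp_sub_one_pos hx) 3).le

lemma antitoneOn_div_exp_sub_one : AntitoneOn (fun x => x / (exp x - 1)) (Ioi 0) := by
  intro x hx y hy hxy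
  have h := convexOn_exp.secant_mono (mem_univ 0) (mem_univ x) (mem_univ y) hx.ne' hy.ne' hxy
  simp only [exp_zero, sub_zero] at h
  dsimp only
  rw [div_le_div_iff₀ (exp_sub_one_pos hy) (exp_sub_one_pos hx)]
  rw [div_le_div_iff₀ hx hy] at h
  linarith

lemma ConvexOn.comp_mul_left_Ioi {f : ℝ → ℝ} (hf : ConvexOn ℝ (Ioi 0) f) {a : ℝ} (ha : 0 < a) :
    ConvexOn ℝ (Ioi 0) fun x => f (a * x) := by
  have h := hf.comp_linearMap (a • LinearMap.id)
  have hpre : (a • LinearMap.id : ℝ →ₗ[ℝ] ℝ) ⁻¹' Ioi 0 = Ioi 0 := by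
    ext x; simp [mul_pos_iff_of_pos_left ha]
  rw [hpre] at h
  exact h

lemma fCB_eq {c : ℝ} (hc : 0 ≤ c) (β : ℝ) {x : ℝ} (hx : 0 < x) :
    fCB c β x = exp (c / 2) * ((2 * x)⁻¹ - 2 * β * x) +
      (exp (c / 2) - 1) / (2 * π) *
        (((2 * x ^ 2)⁻¹ - 2 * β) * (2 * π * x / (exp (2 * π * x) - 1))) := by
  have hE := (exp_sub_one_pos (by positivity : 0 < 2 * π * x)).ne'
  have hED := (exp_sub_one_pos (by positivity : 0 < 2 * π * x + c / 2)).ne'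
  rw [exp_add] at hED
  rw [fCB, rhoC, exp_add]
  generalize exp (2 * π * x) = E at *
  generalize exp (c / 2) = D at *
  field_simp
  ring

section Pieces

variable {β : ℝ}

lemma inv_two_mul_sub_mul_pos (hβ : β ≤ 0) {x : ℝ} (hx : 0 < x) : 0 < (2 * x)⁻¹ - 2 * β * x := by
  have : 0 ≤ -β * x := mul_nonneg (by linarith) hx.le
  have : 0 < (2 * x)⁻¹ := by positivity
  linarith

lemma inv_two_mul_sq_sub_nonneg (hβ : β ≤ 0) (x : ℝ) : 0 ≤ (2 * x ^ 2)⁻¹ - 2 * β :=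
  sub_nonneg.2 ((by linarith : 2 * β ≤ 0).trans (by positivity))

lemma convexOn_inv_two_mul_sub_mul (hβ : β ≤ 0) :
    ConvexOn ℝ (Ioi 0) fun x : ℝ => (2 * x)⁻¹ - 2 * β * x :=
  (((convexOn_zpow (-1)).smul (by norm_num : (0 : ℝ) ≤ 2⁻¹)).add
    ((convexOn_id (convex_Ioi 0)).smul (by linarith : 0 ≤ -2 * β))).congr fun x _ => by
      simp only [Pi.add_apply, smul_eq_mul, zpow_neg_one, id]; ring

lemma convexOn_inv_two_mul_sq_sub (β : ℝ) :
    ConvexOn ℝ (Ioi 0) fun x : ℝ => (2 * x ^ 2)⁻¹ - 2 * β :=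
  (((convexOn_zpow (-2)).smul (by norm_num : (0 : ℝ) ≤ 2⁻¹)).add_const (-2 * β)).congr fun x _ => by
    simp only [Pi.add_apply, smul_eq_mul, zpow_neg, zpow_ofNat]; ring

lemma antitoneOn_inv_two_mul_sq_sub (β : ℝ) :
    AntitoneOn (fun x : ℝ => (2 * x ^ 2)⁻¹ - 2 * β) (Ioi 0) := by
  intro x hx y _ hxy
  dsimp only
  gcongr
  · exact mul_pos two_pos (pow_pos hx 2)
  · exact le_of_lt hx

end Pieces

lemma convexOn_fCB {c β : ℝ} (hc : 0 ≤ c) (hβ : β ≤ 0) : ConvexOn ℝ (Ioi 0) (fCB c β) := by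
  have hB_anti : AntitoneOn (fun x => 2 * π * x / (exp (2 * π * x) - 1)) (Ioi 0) :=
    fun x hx y hy hxy => antitoneOn_div_exp_sub_one (mul_pos two_pi_pos hx)
      (mul_pos two_pi_pos hy) (mul_le_mul_of_nonneg_left hxy two_pi_pos.le)
  have hprod := (convexOn_inv_two_mul_sq_sub β).mul
    (convexOn_div_exp_sub_one.comp_mul_left_Ioi two_pi_pos)
    (fun x _ => inv_two_mul_sq_sub_nonneg hβ x)
    (fun x hx => (div_exp_sub_one_pos (mul_pos two_pi_pos hx)).le)
    ((antitoneOn_inv_two_mul_sq_sub β).monovaryOn hB_anti)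
  have hD : 1 ≤ exp (c / 2) := one_le_exp (by linarith)
  refine (((convexOn_inv_two_mul_sub_mul hβ).smul (exp_pos (c / 2)).le).add
    (hprod.smul (div_nonneg (sub_nonneg.2 hD) two_pi_pos.le))).congr fun x hx => ?_
  simp only [Pi.add_apply, Pi.mul_apply, smul_eq_mul, fCB_eq hc β hx]

lemma inv_two_mul_sub_le_fCB {c β x : ℝ} (hc : 0 ≤ c) (hβ : β ≤ 0) (hx : 0 < x) :
    (2 * x)⁻¹ - 2 * β * x ≤ fCB c β x := by
  have hD : 1 ≤ exp (c / 2) := one_le_exp (by linarith)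
  have hcorr : 0 ≤ (exp (c / 2) - 1) / (2 * π) *
      (((2 * x ^ 2)⁻¹ - 2 * β) * (2 * π * x / (exp (2 * π * x) - 1))) :=
    mul_nonneg (div_nonneg (sub_nonneg.2 hD) two_pi_pos.le)
      (mul_nonneg (inv_two_mul_sq_sub_nonneg hβ x) (div_exp_sub_one_pos (mul_pos two_pi_pos hx)).le)
  rw [fCB_eq hc β hx]
  nlinarith [inv_two_mul_sub_mul_pos hβ hx]

lemma tendsto_inv_two_mul_sub_mul_nhdsGT_zero (β : ℝ) :
    Tendsto (fun x : ℝ => (2 * x)⁻¹ - 2 * β * x) (𝓝[>] 0) atTop := by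
  have hinv : Tendsto (fun x : ℝ => (2 * x)⁻¹) (𝓝[>] 0) atTop := by
    simpa only [mul_inv] using tendsto_inv_nhdsGT_zero.const_mul_atTop (by norm_num : (0 : ℝ) < 2⁻¹)
  have hlin : Tendsto (fun x : ℝ => 2 * β * x) (𝓝[>] 0) (𝓝 0) := by
    simpa using ((continuous_const_mul (2 * β)).tendsto 0).mono_left nhdsWithin_le_nhds
  exact hinv.atTop_add hlin.neg |>.congr fun x => by simp [sub_eq_add_neg]

lemma tendsto_inv_two_mul_sub_mul_atTop {β : ℝ} (hβ : β < 0) :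
    Tendsto (fun x : ℝ => (2 * x)⁻¹ - 2 * β * x) atTop atTop := by
  have hinv : Tendsto (fun x : ℝ => (2 * x)⁻¹) atTop (𝓝 0) :=
    tendsto_inv_atTop_zero.comp (tendsto_id.const_mul_atTop two_pos)
  have hlin : Tendsto (fun x : ℝ => -(2 * β) * x) atTop atTop :=
    tendsto_id.const_mul_atTop (by linarith)
  exact hinv.add_atTop hlin |>.congr fun x => by ring

/-- Lemma 4.1(i) (lemma `prf`(i)): for `β < 0`, `f_{c,β}` is positive and convex on `(0,∞)`,
and tends to `∞` both as `λ → 0⁺` and as `λ → ∞`. -/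
theorem rotating_waves_stmt_6 (c β : ℝ) (hc : 0 ≤ c) (hβ : β < 0) :
    (∀ lam ∈ Set.Ioi (0 : ℝ), 0 < fCB c β lam) ∧
    ConvexOn ℝ (Set.Ioi (0 : ℝ)) (fCB c β) ∧
    Filter.Tendsto (fCB c β) (nhdsWithin 0 (Set.Ioi 0)) Filter.atTop ∧
    Filter.Tendsto (fCB c β) Filter.atTop Filter.atTop := by
  have hlow (x : ℝ) (hx : x ∈ Ioi 0) : (2 * x)⁻¹ - 2 * β * x ≤ fCB c β x :=
    inv_two_mul_sub_le_fCB hc hβ.le hx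
  exact ⟨fun x hx => (inv_two_mul_sub_mul_pos hβ.le hx).trans_le (hlow x hx),
    convexOn_fCB hc hβ.le,
    tendsto_atTop_mono' _ (eventually_mem_nhdsWithin.mono hlow)
      (tendsto_inv_two_mul_sub_mul_nhdsGT_zero β),
    tendsto_atTop_mono' _ ((eventually_gt_atTop 0).mono hlow)
      (tendsto_inv_two_mul_sub_mul_atTop hβ)⟩
end

section
/- Let c ≥ 0 and β ≥ 0. Then f_{c,β} is strictly decreasing on (0, ∞) and f_{c,β}(λ) → ∞ as λ → 0⁺. Moreover, if β > 0 then f_{c,β}(1/(2√β)) = 0, while if β = 0 then f_{c,0}(λ) > 0 for all λ > 0 and f_{c,0}(λ) → 0 as λ → ∞. -/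
/-! With `k = exp (c / 2)` and `t = 2πλ` one has `1 / ρ_c(λ) = 1 + (k - 1) / (1 - e^{-t})`, which is
at least `1` and antitone in `λ`, while `λ / ρ_c(λ) = λ + (k - 1) λ / (1 - e^{-t})` is strictly
increasing because `(1 - e^{-t}) / t` decreases (convexity of `exp`). Hence
`f_{c,β}(λ) = 1 / (2λ ρ_c(λ)) - 2β λ / ρ_c(λ)` is strictly decreasing for `β ≥ 0`, it dominates
`1 / (2λ) - 2βλ` near `0`, and `f_{c,0}` lies between `0` and `1 / (2λ ρ_c(1))` for `λ ≥ 1`. -/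

open Real Filter Set Topology

lemma one_sub_exp_neg_pos {t : ℝ} (ht : 0 < t) : 0 < 1 - exp (-t) :=
  sub_pos.2 (exp_lt_one_iff.2 (neg_neg_of_pos ht))

lemma monotoneOn_div_one_sub_exp_neg_mul {a : ℝ} (ha : 0 < a) :
    MonotoneOn (fun x => x / (1 - exp (-(a * x)))) (Ioi 0) := by
  intro s (hs : 0 < s) t (ht : 0 < t) hst
  have has : 0 < a * s := mul_pos ha hs
  have hat : 0 < a * t := mul_pos ha ht
  -- `(1 - exp (-u)) / u` is the slope of `exp` on `[-u, 0]`, which decreases in `u` by convexity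
  have hslope := convexOn_exp.secant_mono (mem_univ 0) (mem_univ (-(a * t)))
    (mem_univ (-(a * s))) (by linarith) (by linarith) (by nlinarith)
  simp only [exp_zero, sub_zero, div_neg_eq_neg_div, neg_div, ← neg_sub (1 : ℝ), neg_neg,
    div_le_div_iff₀ hat has] at hslope
  rw [div_le_div_iff₀ (one_sub_exp_neg_pos has) (one_sub_exp_neg_pos hat)]
  refine le_of_mul_le_mul_left ?_ ha
  linarith

lemma inv_rhoC_eq (c : ℝ) {x : ℝ} (hx : 0 < x) :
    (rhoC c x)⁻¹ = 1 + (exp (c / 2) - 1) / (1 - exp (-(2 * π * x))) := by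
  have hpos := one_sub_exp_neg_pos (by positivity : 0 < 2 * π * x)
  have hE : exp (2 * π * x) - 1 ≠ 0 :=
    (sub_pos.2 (one_lt_exp_iff.2 (by positivity))).ne'
  rw [rhoC, inv_div, exp_add, exp_neg]
  field_simp
  ring

lemma one_le_inv_rhoC {c x : ℝ} (hc : 0 ≤ c) (hx : 0 < x) : 1 ≤ (rhoC c x)⁻¹ := by
  rw [inv_rhoC_eq c hx]
  exact le_add_of_nonneg_right <| div_nonneg (sub_nonneg.2 (one_le_exp (by positivity)))
    (one_sub_exp_neg_pos (by positivity)).le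

lemma inv_rhoC_pos {c x : ℝ} (hc : 0 ≤ c) (hx : 0 < x) : 0 < (rhoC c x)⁻¹ :=
  one_pos.trans_le (one_le_inv_rhoC hc hx)

lemma antitoneOn_inv_rhoC {c : ℝ} (hc : 0 ≤ c) :
    AntitoneOn (fun x => (rhoC c x)⁻¹) (Ioi 0) := by
  intro x (hx : 0 < x) y (hy : 0 < y) hxy
  simp only [inv_rhoC_eq c hx, inv_rhoC_eq c hy, add_le_add_iff_left]
  gcongr
  · exact sub_nonneg.2 (one_le_exp (by positivity))
  · exact one_sub_exp_neg_pos (by positivity)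

lemma strictMonoOn_mul_inv_rhoC {c : ℝ} (hc : 0 ≤ c) :
    StrictMonoOn (fun x => x * (rhoC c x)⁻¹) (Ioi 0) := by
  have hsum : EqOn (fun x => x * (rhoC c x)⁻¹)
      (fun x => x + (exp (c / 2) - 1) * (x / (1 - exp (-(2 * π * x))))) (Ioi 0) := by
    intro x (hx : 0 < x)
    simp only [inv_rhoC_eq c hx]
    ring
  refine StrictMonoOn.congr ?_ hsum.symm
  refine strictMonoOn_id.add_monotone fun x hx y hy hxy => ?_
  exact mul_le_mul_of_nonneg_left (monotoneOn_div_one_sub_exp_neg_mul (by positivity) hx hy hxy)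
    (sub_nonneg.2 (one_le_exp (by positivity)))

lemma fCB_eq_mul_inv_rhoC (c β x : ℝ) :
    fCB c β x = ((2 * x)⁻¹ - 2 * β * x) * (rhoC c x)⁻¹ := by
  rcases eq_or_ne x 0 with rfl | hx
  · simp [fCB]
  · rw [fCB, div_eq_mul_inv, mul_inv]
    field_simp
    ring

lemma strictAntiOn_fCB {c β : ℝ} (hc : 0 ≤ c) (hβ : 0 ≤ β) :
    StrictAntiOn (fCB c β) (Ioi 0) := by
  intro x (hx : 0 < x) y (hy : 0 < y) hxy
  have hsplit : ∀ z, fCB c β z = (2 * z)⁻¹ * (rhoC c z)⁻¹ - 2 * β * (z * (rhoC c z)⁻¹) := by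
    intro z
    rw [fCB_eq_mul_inv_rhoC]
    ring
  have hfirst : (2 * y)⁻¹ * (rhoC c y)⁻¹ < (2 * x)⁻¹ * (rhoC c x)⁻¹ :=
    mul_lt_mul (by gcongr) (antitoneOn_inv_rhoC hc hx hy hxy.le)
      (inv_rhoC_pos hc hy) (by positivity)
  have hsecond := mul_le_mul_of_nonneg_left (strictMonoOn_mul_inv_rhoC hc hx hy hxy).le
    (by positivity : 0 ≤ 2 * β)
  rw [hsplit, hsplit]
  linarith

lemma tendsto_fCB_nhdsGT_zero {c : ℝ} (hc : 0 ≤ c) (β : ℝ) :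
    Tendsto (fCB c β) (𝓝[>] 0) atTop := by
  have hinv : Tendsto (fun x : ℝ => (2 * x)⁻¹) (𝓝[>] 0) atTop := by
    simpa only [mul_inv] using tendsto_inv_nhdsGT_zero.const_mul_atTop (inv_pos.2 two_pos)
  have hlin : Tendsto (fun x : ℝ => 2 * β * x) (𝓝[>] 0) (𝓝 0) := by
    simpa using ((continuous_const_mul (2 * β)).tendsto 0).mono_left nhdsWithin_le_nhds
  have hfactor := hinv.atTop_add hlin.neg
  simp only [← sub_eq_add_neg] at hfactor
  refine tendsto_atTop_mono' _ ?_ hfactor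
  filter_upwards [hfactor.eventually_ge_atTop 0, self_mem_nhdsWithin] with x hfx (hx : 0 < x)
  rw [fCB_eq_mul_inv_rhoC]
  exact le_mul_of_one_le_right hfx (one_le_inv_rhoC hc hx)

lemma fCB_one_div_two_sqrt (c : ℝ) {β : ℝ} (hβ : 0 < β) : fCB c β (1 / (2 * √β)) = 0 := by
  have hsqrt : √β ≠ 0 := (sqrt_pos.2 hβ).ne'
  rw [fCB, div_eq_zero_iff]
  left
  field_simp
  rw [sq_sqrt hβ.le]
  ring

lemma fCB_zero_pos {c x : ℝ} (hc : 0 ≤ c) (hx : 0 < x) : 0 < fCB c 0 x := by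
  rw [fCB_eq_mul_inv_rhoC, mul_zero, zero_mul, sub_zero]
  exact mul_pos (by positivity) (inv_rhoC_pos hc hx)

lemma tendsto_fCB_zero_atTop {c : ℝ} (hc : 0 ≤ c) : Tendsto (fCB c 0) atTop (𝓝 0) := by
  have hbound : Tendsto (fun x : ℝ => (2 * x)⁻¹ * (rhoC c 1)⁻¹) atTop (𝓝 0) := by
    simpa using (tendsto_inv_atTop_zero.comp (tendsto_id.const_mul_atTop two_pos)).mul_const
      (rhoC c 1)⁻¹
  refine tendsto_of_tendsto_of_tendsto_of_le_of_le' tendsto_const_nhds hbound ?_ ?_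
  · filter_upwards [eventually_gt_atTop 0] with x hx using (fCB_zero_pos hc hx).le
  · filter_upwards [eventually_ge_atTop 1] with x hx
    rw [fCB_eq_mul_inv_rhoC, mul_zero, zero_mul, sub_zero]
    exact mul_le_mul_of_nonneg_left
      (antitoneOn_inv_rhoC hc (mem_Ioi.2 one_pos) (mem_Ioi.2 (one_pos.trans_le hx)) hx)
      (by positivity)

/-- Lemma 4.1(ii) (lemma `prf`(ii)): for `β ≥ 0`, `f_{c,β}` is decreasing on `(0,∞)` and
tends to `∞` as `λ → 0⁺`; if `β > 0` it vanishes at `λ = 1/(2√β)`, and if `β = 0` it is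
positive on `(0,∞)` and tends to `0` at `∞`. -/
theorem rotating_waves_stmt_7 (c β : ℝ) (hc : 0 ≤ c) (hβ : 0 ≤ β) :
    StrictAntiOn (fCB c β) (Set.Ioi (0 : ℝ)) ∧
    Filter.Tendsto (fCB c β) (nhdsWithin 0 (Set.Ioi 0)) Filter.atTop ∧
    (0 < β → fCB c β (1 / (2 * Real.sqrt β)) = 0) ∧
    (β = 0 → (∀ lam ∈ Set.Ioi (0 : ℝ), 0 < fCB c 0 lam) ∧
      Filter.Tendsto (fCB c 0) Filter.atTop (nhds 0)) :=
  ⟨strictAntiOn_fCB hc hβ, tendsto_fCB_nhdsGT_zero hc β, fCB_one_div_two_sqrt c,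
    fun _ => ⟨fun _ hx => fCB_zero_pos hc hx, tendsto_fCB_zero_atTop hc⟩⟩
end

section
/- Let c > 0 and β < 0, and let Ω(c, β) = min_{λ>0} f_{c,β}(λ). For each g > Ω(c, β) let λ̲(g) < λ̄(g) denote the two solutions λ > 0 of f_{c,β}(λ) = g. Then lim_{g→∞} λ̄(g)/g = e^{−c/2}/(2|β|) and lim_{g→∞} √g · λ̲(g) = (1/2)√((e^{c/2} − 1)/π). -/
/-!
Write `f_{c,β} = u / ρ_c` with `u λ = (1 - 4βλ²)/(2λ)`. Since `f` is continuous on `(0, ∞)`,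
both solutions of `f = g` leave every compact subset of `(0, ∞)` as `g → ∞`. They cannot both
tend to `0`, because `f` is strictly decreasing on `(0, 1/(2√|β|)]` (there `u` decreases and `ρ_c`
increases), and they cannot both tend to `∞`, because `f` is strictly increasing once `πλ ≥ 1`
and `4|β|λ² ≥ 3`: then `u'/u ≥ 1/(2λ)`, while `ρ_c'/ρ_c < 2π/(e^{2πλ} - 1) ≤ 1/(2λ)`. Hence
`λ̄ → ∞` and `λ̲ → 0⁺`, and the two limits follow from `λ / f(λ) → e^{-c/2}/(2|β|)` as `λ → ∞`
and `λ² f(λ) → (e^{c/2} - 1)/(4π)` as `λ → 0`.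
-/

open Real Filter Set Topology

section Rho

variable {c x : ℝ}

lemma one_lt_exp_two_pi_mul (hx : 0 < x) : 1 < exp (2 * π * x) :=
  one_lt_exp_iff.2 (by positivity)

lemma exp_two_pi_mul_lt_exp_add (hc : 0 < c) : exp (2 * π * x) < exp (2 * π * x + c / 2) :=
  exp_lt_exp.2 (by linarith)

lemma rhoC_pos (hc : 0 < c) (hx : 0 < x) : 0 < rhoC c x := by
  have := one_lt_exp_two_pi_mul hx
  have := exp_two_pi_mul_lt_exp_add (x := x) hc
  exact div_pos (by linarith) (by linarith)

lemma hasDerivAt_rhoC (hc : 0 < c) (hx : 0 < x) :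
    HasDerivAt (rhoC c) (2 * π * (exp (2 * π * x + c / 2) - exp (2 * π * x)) /
      (exp (2 * π * x + c / 2) - 1) ^ 2) x := by
  have hA : exp (2 * π * x + c / 2) - 1 ≠ 0 := by
    have := one_lt_exp_two_pi_mul hx
    have := exp_two_pi_mul_lt_exp_add (x := x) hc
    linarith
  have hlin : HasDerivAt (fun y => 2 * π * y) (2 * π) x := by
    simpa using (hasDerivAt_id x).const_mul (2 * π)
  exact ((hlin.exp.sub_const 1).div ((hlin.add_const (c / 2)).exp.sub_const 1) hA).congr_deriv
    (by ring)

lemma tendsto_rhoC_atTop (c : ℝ) : Tendsto (rhoC c) atTop (𝓝 (exp (-(c / 2)))) := by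
  have hinv : Tendsto (fun x => (exp (2 * π * x))⁻¹) atTop (𝓝 0) :=
    (tendsto_exp_atTop.comp (tendsto_id.const_mul_atTop (by positivity))).inv_tendsto_atTop
  have hlim : Tendsto (fun x => (1 - (exp (2 * π * x))⁻¹) / (exp (c / 2) - (exp (2 * π * x))⁻¹))
      atTop (𝓝 ((1 - 0) / (exp (c / 2) - 0))) :=
    (tendsto_const_nhds.sub hinv).div (tendsto_const_nhds.sub hinv) (by simp [(exp_pos _).ne'])
  rw [sub_zero, sub_zero, one_div, ← exp_neg] at hlim
  refine hlim.congr fun x => ?_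
  rw [rhoC, exp_add]
  field_simp

lemma tendsto_div_rhoC_nhdsNE (c : ℝ) :
    Tendsto (fun x => x / rhoC c x) (𝓝[≠] 0) (𝓝 ((exp (c / 2) - 1) / (2 * π))) := by
  have hslope : Tendsto (fun x => (exp (2 * π * x) - 1) / x) (𝓝[≠] 0) (𝓝 (2 * π)) := by
    have hd : HasDerivAt (fun x => exp (2 * π * x)) (2 * π) 0 := by
      simpa using ((hasDerivAt_id (0 : ℝ)).const_mul (2 * π)).exp
    refine (hasDerivAt_iff_tendsto_slope.1 hd).congr fun x => ?_
    simp [slope_def_field]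
  have hnum : Tendsto (fun x => exp (2 * π * x + c / 2) - 1) (𝓝[≠] 0) (𝓝 (exp (c / 2) - 1)) := by
    have hcont : Continuous fun x => exp (2 * π * x + c / 2) - 1 := by fun_prop
    simpa using (hcont.tendsto 0).mono_left nhdsWithin_le_nhds
  refine (hnum.div hslope (by positivity)).congr fun x => ?_
  simp only [Pi.div_apply, rhoC, div_div_eq_mul_div, mul_comm]

end Rho

section FCB

variable {c β x : ℝ}

lemma fCB_eq_div_rhoC (c β : ℝ) : fCB c β = fun x => (1 - 4 * β * x ^ 2) / (2 * x) / rhoC c x :=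
  funext fun _ => (div_div _ _ _).symm

lemma hasDerivAt_fCB (hc : 0 < c) (hx : 0 < x) :
    HasDerivAt (fCB c β)
      (-((1 + 4 * β * x ^ 2) * (exp (2 * π * x) - 1) * (exp (2 * π * x + c / 2) - 1) +
          2 * π * x * (1 - 4 * β * x ^ 2) * (exp (2 * π * x + c / 2) - exp (2 * π * x))) /
        (2 * x ^ 2 * (exp (2 * π * x) - 1) ^ 2)) x := by
  have hE := one_lt_exp_two_pi_mul hx
  have hA := exp_two_pi_mul_lt_exp_add (x := x) hc
  have hu : HasDerivAt (fun x => (1 - 4 * β * x ^ 2) / (2 * x))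
      (-(1 + 4 * β * x ^ 2) / (2 * x ^ 2)) x := by
    have := ((hasDerivAt_pow 2 x).const_mul (4 * β) |>.const_sub 1).div
      ((hasDerivAt_id' x).const_mul 2) (by positivity)
    exact this.congr_deriv (by field_simp; ring)
  rw [fCB_eq_div_rhoC]
  refine (hu.div (hasDerivAt_rhoC hc hx) (rhoC_pos hc hx).ne').congr_deriv ?_
  rw [rhoC]
  generalize exp (2 * π * x) = E at *
  generalize exp (2 * π * x + c / 2) = A at *
  have : E - 1 ≠ 0 := by linarith
  have : A - 1 ≠ 0 := by linarith
  field_simp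
  ring

lemma continuousOn_fCB (hc : 0 < c) : ContinuousOn (fCB c β) (Ioi 0) :=
  fun _ hx => (hasDerivAt_fCB hc hx).continuousAt.continuousWithinAt

lemma fCB_strictAntiOn (hc : 0 < c) (hβ : β ≤ 0) {δ : ℝ} (hδ : -4 * β * δ ^ 2 ≤ 1) :
    StrictAntiOn (fCB c β) (Ioc 0 δ) := by
  refine strictAntiOn_of_deriv_neg (convex_Ioc 0 δ)
    ((continuousOn_fCB hc).mono Ioc_subset_Ioi_self) fun x hx => ?_
  rw [interior_Ioc] at hx
  obtain ⟨hx0, hxδ⟩ := hx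
  rw [(hasDerivAt_fCB hc hx0).deriv]
  have hE := one_lt_exp_two_pi_mul hx0
  have hA := exp_two_pi_mul_lt_exp_add (x := x) hc
  have hsmall : 0 < 1 + 4 * β * x ^ 2 := by
    nlinarith [mul_lt_mul_of_pos_left hxδ hx0, mul_lt_mul_of_pos_left hxδ (hx0.trans hxδ)]
  have hlarge : 0 < 1 - 4 * β * x ^ 2 := by nlinarith [sq_nonneg x]
  refine div_neg_of_neg_of_pos (neg_neg_of_pos (add_pos ?_ ?_))
    (mul_pos (by positivity) (pow_pos (by linarith) 2))
  · exact mul_pos (mul_pos hsmall (by linarith)) (by linarith)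
  · exact mul_pos (mul_pos (by positivity) hlarge) (by linarith)

lemma fCB_strictMonoOn (hc : 0 < c) {M : ℝ} (hM : 1 ≤ π * M) (hβM : 3 ≤ -4 * β * M ^ 2) :
    StrictMonoOn (fCB c β) (Ici M) := by
  have hM0 : 0 < M := pos_of_mul_pos_right (one_pos.trans_le hM) pi_pos.le
  refine strictMonoOn_of_deriv_pos (convex_Ici M)
    ((continuousOn_fCB hc).mono fun y hy => hM0.trans_le hy) fun x hx => ?_
  rw [interior_Ici] at hx
  have hx0 : 0 < x := hM0.trans hx
  rw [(hasDerivAt_fCB hc hx0).deriv]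
  have hE := one_lt_exp_two_pi_mul hx0
  have hA := exp_two_pi_mul_lt_exp_add (x := x) hc
  have ht : 3 ≤ -4 * β * x ^ 2 :=
    hβM.trans (by nlinarith [mul_lt_mul_of_pos_left hx hM0, mul_lt_mul_of_pos_left hx hx0])
  set t := -4 * β * x ^ 2
  have hexp : 4 * π * x ≤ exp (2 * π * x) - 1 := by
    have := quadratic_le_exp_of_nonneg (x := 2 * π * x) (by positivity)
    nlinarith [mul_lt_mul_of_pos_left hx pi_pos]
  have key : 2 * π * x * (1 + t) * (exp (2 * π * x + c / 2) - exp (2 * π * x)) <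
      (t - 1) * (exp (2 * π * x) - 1) * (exp (2 * π * x + c / 2) - 1) := by
    calc 2 * π * x * (1 + t) * (exp (2 * π * x + c / 2) - exp (2 * π * x))
        < 2 * π * x * (1 + t) * (exp (2 * π * x + c / 2) - 1) := by gcongr
      _ ≤ (t - 1) * (exp (2 * π * x) - 1) * (exp (2 * π * x + c / 2) - 1) := by
        refine mul_le_mul_of_nonneg_right ?_ (by linarith)
        nlinarith [mul_le_mul_of_nonneg_left hexp (by linarith : (0 : ℝ) ≤ t - 1)]
  refine div_pos ?_ (mul_pos (by positivity) (pow_pos (by linarith) 2))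
  have h1 : 1 + 4 * β * x ^ 2 = -(t - 1) := by ring
  have h2 : 1 - 4 * β * x ^ 2 = 1 + t := by ring
  rw [h1, h2]
  linarith

lemma tendsto_div_fCB_atTop (hβ : β ≠ 0) :
    Tendsto (fun x => x / fCB c β x) atTop (𝓝 (exp (-(c / 2)) / (-2 * β))) := by
  have hinv : Tendsto (fun x : ℝ => (x ^ 2)⁻¹) atTop (𝓝 0) :=
    tendsto_inv_atTop_zero.comp (tendsto_pow_atTop two_ne_zero)
  have hu : Tendsto (fun x : ℝ => 2 / ((x ^ 2)⁻¹ - 4 * β)) atTop (𝓝 (2 / (0 - 4 * β))) :=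
    tendsto_const_nhds.div (hinv.sub tendsto_const_nhds) (by simpa using hβ)
  have hlim := hu.mul (tendsto_rhoC_atTop c)
  rw [show 2 / (0 - 4 * β) * exp (-(c / 2)) = exp (-(c / 2)) / (-2 * β) by field_simp; ring] at hlim
  refine hlim.congr' ((eventually_ne_atTop 0).mono fun x hx => ?_)
  rw [fCB_eq_div_rhoC]
  field_simp

lemma tendsto_sq_mul_fCB_nhdsNE (c β : ℝ) :
    Tendsto (fun x => x ^ 2 * fCB c β x) (𝓝[≠] 0) (𝓝 ((exp (c / 2) - 1) / (4 * π))) := by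
  have hu : Tendsto (fun x : ℝ => (1 - 4 * β * x ^ 2) / 2) (𝓝[≠] 0)
      (𝓝 ((1 - 4 * β * 0 ^ 2) / 2)) :=
    (Continuous.tendsto (by fun_prop) 0).mono_left nhdsWithin_le_nhds
  have hlim := hu.mul (tendsto_div_rhoC_nhdsNE c)
  rw [show (1 - 4 * β * 0 ^ 2) / 2 * ((exp (c / 2) - 1) / (2 * π)) = (exp (c / 2) - 1) / (4 * π) by
    field_simp; ring] at hlim
  refine hlim.congr' ?_
  filter_upwards [self_mem_nhdsWithin] with x (hx : x ≠ 0)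
  rw [fCB_eq_div_rhoC]
  field_simp

end FCB

section Branches

variable {F lo hi : ℝ → ℝ}

lemma eventually_notMem_of_continuousOn {s : Set ℝ} (hs : IsCompact s) (hF : ContinuousOn F s)
    {x : ℝ → ℝ} (hx : ∀ᶠ g in atTop, F (x g) = g) : ∀ᶠ g in atTop, x g ∉ s := by
  obtain ⟨C, hC⟩ := hs.bddAbove_image hF
  filter_upwards [hx, eventually_gt_atTop C] with g hg hCg hmem
  exact hCg.not_ge (hg ▸ hC (mem_image_of_mem F hmem))

lemma tendsto_atTop_of_strictAntiOn (hF : ContinuousOn F (Ioi 0)) {δ : ℝ} (hδ : 0 < δ)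
    (hanti : StrictAntiOn F (Ioc 0 δ))
    (hsol : ∀ᶠ g in atTop, 0 < lo g ∧ lo g < hi g ∧ F (lo g) = g ∧ F (hi g) = g) :
    Tendsto hi atTop atTop := by
  refine tendsto_atTop.2 fun K => ?_
  have hsub : Icc δ (max K δ) ⊆ Ioi 0 := fun y hy => hδ.trans_le hy.1
  filter_upwards [hsol, eventually_notMem_of_continuousOn isCompact_Icc (hF.mono hsub)
    (hsol.mono fun _ h => h.2.2.2)] with g ⟨hlo, hlt, hFlo, hFhi⟩ hout
  by_contra! hK
  have hhi : hi g < δ := by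
    by_contra! h
    exact hout ⟨h, hK.le.trans (le_max_left _ _)⟩
  have := hanti ⟨hlo, (hlt.trans hhi).le⟩ ⟨hlo.trans hlt, hhi.le⟩ hlt
  rw [hFlo, hFhi] at this
  exact this.false

lemma tendsto_nhdsGT_zero_of_strictMonoOn (hF : ContinuousOn F (Ioi 0)) {M : ℝ} (hM : 0 < M)
    (hmono : StrictMonoOn F (Ici M))
    (hsol : ∀ᶠ g in atTop, 0 < lo g ∧ lo g < hi g ∧ F (lo g) = g ∧ F (hi g) = g) :
    Tendsto lo atTop (𝓝[>] 0) := by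
  refine tendsto_nhdsWithin_iff.2 ⟨?_, hsol.mono fun _ h => h.1⟩
  refine tendsto_order.2 ⟨fun a ha => hsol.mono fun _ h => ha.trans h.1, fun ε hε => ?_⟩
  have hsub : Icc (min ε M) M ⊆ Ioi 0 := fun y hy => (lt_min hε hM).trans_le hy.1
  filter_upwards [hsol, eventually_notMem_of_continuousOn isCompact_Icc (hF.mono hsub)
    (hsol.mono fun _ h => h.2.2.1)] with g ⟨hlo, hlt, hFlo, hFhi⟩ hout
  by_contra! hε'
  have hMlo : M < lo g := by
    by_contra! h
    exact hout ⟨(min_le_left _ _).trans hε', h⟩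
  have := hmono hMlo.le (hMlo.trans hlt).le hlt
  rw [hFlo, hFhi] at this
  exact this.false

end Branches

theorem rotating_waves_stmt_11_general (c β : ℝ) (hc : 0 < c) (hβ : β < 0)
    (Ω : ℝ)
    (llow lbar : ℝ → ℝ)
    (hsol : ∀ g : ℝ, Ω < g →
      0 < llow g ∧ llow g < lbar g ∧ fCB c β (llow g) = g ∧ fCB c β (lbar g) = g) :
    Filter.Tendsto (fun g => lbar g / g) Filter.atTop
      (nhds (Real.exp (-(c / 2)) / (2 * |β|))) ∧
    Filter.Tendsto (fun g => Real.sqrt g * llow g) Filter.atTop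
      (nhds ((1 / 2) * Real.sqrt ((Real.exp (c / 2) - 1) / Real.pi))) := by
  have hsol' := (eventually_gt_atTop Ω).mono hsol
  have hF := continuousOn_fCB (β := β) hc
  have hβ4 : 0 < -4 * β := by linarith
  obtain ⟨δ, hδ, hδβ⟩ : ∃ δ : ℝ, 0 < δ ∧ -4 * β * δ ^ 2 ≤ 1 :=
    ⟨(√(-4 * β))⁻¹, inv_pos.2 (sqrt_pos.2 hβ4), by
      rw [inv_pow, sq_sqrt hβ4.le, mul_inv_cancel₀ hβ4.ne']⟩
  obtain ⟨M, hM, hMβ⟩ : ∃ M : ℝ, 1 ≤ π * M ∧ 3 ≤ -4 * β * M ^ 2 :=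
    (((tendsto_id.const_mul_atTop pi_pos).eventually_ge_atTop 1).and
      (((tendsto_pow_atTop two_ne_zero).const_mul_atTop hβ4).eventually_ge_atTop 3)).exists
  have hM0 : 0 < M := pos_of_mul_pos_right (one_pos.trans_le hM) pi_pos.le
  have hhi := tendsto_atTop_of_strictAntiOn hF hδ (fCB_strictAntiOn hc hβ.le hδβ) hsol'
  have hlo := tendsto_nhdsGT_zero_of_strictMonoOn hF hM0 (fCB_strictMonoOn hc hM hMβ) hsol'
  constructor
  · rw [abs_of_neg hβ, show 2 * -β = -2 * β by ring]
    refine ((tendsto_div_fCB_atTop hβ.ne).comp hhi).congr' ?_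
    filter_upwards [hsol'] with g ⟨_, _, _, hg⟩
    simp only [Function.comp_apply, hg]
  · have hlo' := hlo.mono_right (nhdsGT_le_nhdsNE 0)
    have hsq := (continuous_sqrt.tendsto _).comp ((tendsto_sq_mul_fCB_nhdsNE c β).comp hlo')
    rw [show (exp (c / 2) - 1) / (4 * π) = (1 / 2) ^ 2 * ((exp (c / 2) - 1) / π) by ring,
      sqrt_mul (by positivity), sqrt_sq (by norm_num)] at hsq
    refine hsq.congr' ?_
    filter_upwards [hsol'] with g ⟨hlo, _, hg, _⟩
    simp only [Function.comp_apply, hg]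
    rw [sqrt_mul (sq_nonneg _), sqrt_sq hlo.le, mul_comm]

/-- Lemma 4.2 (lemma `asa`), case `c > 0`, `β < 0`: the asymptotics of the two branches
of solutions of `f_{c,β}(λ) = g` as `g → ∞`:
`λ̄(g)/g → e^{-c/2}/(2|β|)` and `√g · λ̲(g) → (1/2)√((e^{c/2} - 1)/π)`. -/
theorem rotating_waves_stmt_11 (c β : ℝ) (hc : 0 < c) (hβ : β < 0)
    (Ω : ℝ) (hΩ : IsLeast (fCB c β '' Set.Ioi 0) Ω)
    (llow lbar : ℝ → ℝ)
    (hsol : ∀ g : ℝ, Ω < g →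
      0 < llow g ∧ llow g < lbar g ∧ fCB c β (llow g) = g ∧ fCB c β (lbar g) = g) :
    Filter.Tendsto (fun g => lbar g / g) Filter.atTop
      (nhds (Real.exp (-(c / 2)) / (2 * |β|))) ∧
    Filter.Tendsto (fun g => Real.sqrt g * llow g) Filter.atTop
      (nhds ((1 / 2) * Real.sqrt ((Real.exp (c / 2) - 1) / Real.pi))) :=
  rotating_waves_stmt_11_general c β hc hβ Ω llow lbar hsol
end

section
/- Let c ≥ 0, β ∈ ℝ, g > 0, λ > 0, and suppose φ : ℝ → ℝ is differentiable, satisfies φ'(z) = λ h(φ(z)) + (g/2) ρ_c(λ) w(φ(z)) for all z ∈ ℝ, and φ(π) − φ(−π) = 2π. Then 4λ²β + 2gλ ρ_c(λ) = 1. -/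
open Real Set Function
open scoped NNReal

/-- Weierstrass-substitution primitive of `t ↦ 1 / (A + B cos t)` for `|B| < A`, written so that
it is smooth on all of `ℝ` rather than on one period. -/
noncomputable def invAddMulCosPrimitive (A B t : ℝ) : ℝ :=
  (t - 2 * arctan (B * sin t / (A + √(A ^ 2 - B ^ 2) + B * cos t))) / √(A ^ 2 - B ^ 2)

theorem neg_abs_le_mul_cos (B t : ℝ) : -|B| ≤ B * cos t := by
  refine (abs_le.1 ?_).1
  rw [abs_mul]
  exact mul_le_of_le_one_right (abs_nonneg B) (abs_cos_le_one t)

theorem hasDerivAt_invAddMulCosPrimitive {A B : ℝ} (hAB : |B| < A) (t : ℝ) :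
    HasDerivAt (invAddMulCosPrimitive A B) (A + B * cos t)⁻¹ t := by
  set S := √(A ^ 2 - B ^ 2)
  have hsq : 0 < A ^ 2 - B ^ 2 := sub_pos.2 (sq_lt_sq' (abs_lt.1 hAB).1 (abs_lt.1 hAB).2)
  have hS2 : S ^ 2 = A ^ 2 - B ^ 2 := sq_sqrt hsq.le
  have hS : 0 < S := sqrt_pos.2 hsq
  have hpos : 0 < A + B * cos t := by linarith [neg_abs_le_mul_cos B t]
  have hden : 0 < A + S + B * cos t := by linarith
  have hquot : HasDerivAt (fun t => B * sin t / (A + S + B * cos t))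
      ((B * cos t * (A + S + B * cos t) - B * sin t * (B * -sin t)) / (A + S + B * cos t) ^ 2) t :=
    ((hasDerivAt_sin t).const_mul B).div
      (((hasDerivAt_cos t).const_mul B).const_add (A + S)) hden.ne'
  refine (((hasDerivAt_id t).sub (hquot.arctan.const_mul 2)).div_const S).congr_deriv ?_
  have hsc := sin_sq_add_cos_sq t
  field_simp
  linear_combination -(A + B * cos t + S) * (B ^ 2 * hsc + hS2)

theorem invAddMulCosPrimitive_add_two_pi (A B t : ℝ) :
    invAddMulCosPrimitive A B (t + 2 * π) =
      invAddMulCosPrimitive A B t + 2 * π / √(A ^ 2 - B ^ 2) := by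
  simp only [invAddMulCosPrimitive, sin_add_two_pi, cos_add_two_pi]
  ring

theorem sub_eq_of_hasDerivAt_add_mul_cos {A B : ℝ} (hAB : |B| < A) {φ : ℝ → ℝ}
    (hφ : ∀ z, HasDerivAt φ (A + B * cos (φ z)) z) {a b : ℝ} (hab : φ b - φ a = 2 * π) :
    b - a = 2 * π / √(A ^ 2 - B ^ 2) := by
  set G := invAddMulCosPrimitive A B
  have hderiv : ∀ z, HasDerivAt (fun z => G (φ z) - z) 0 z := fun z => by
    have hpos : 0 < A + B * cos (φ z) := by linarith [neg_abs_le_mul_cos B (φ z)]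
    refine (((hasDerivAt_invAddMulCosPrimitive hAB (φ z)).comp z (hφ z)).sub
      (hasDerivAt_id z)).congr_deriv ?_
    rw [inv_mul_cancel₀ hpos.ne', sub_self]
  have hconst : G (φ b) - b = G (φ a) - a :=
    is_const_of_deriv_eq_zero (fun z => (hderiv z).differentiableAt) (fun z => (hderiv z).deriv) _ _
  have hGb : G (φ b) = G (φ a) + 2 * π / √(A ^ 2 - B ^ 2) := by
    rw [show φ b = φ a + 2 * π by linarith]
    exact invAddMulCosPrimitive_add_two_pi A B (φ a)
  linarith

/-- By uniqueness of solutions, a solution that reaches a zero of `f` stays there forever; but one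
that advances by a full period must reach a translate of any zero. -/
theorem Function.Periodic.ne_zero_of_hasDerivAt_of_sub_eq {f : ℝ → ℝ} {p : ℝ} {K : ℝ≥0}
    (hf : LipschitzWith K f) (hper : Periodic f p) (hp : 0 < p) {φ : ℝ → ℝ}
    (hφ : ∀ z, HasDerivAt φ (f (φ z)) z) {a b : ℝ} (hab : φ b - φ a = p) (θ : ℝ) :
    f θ ≠ 0 := by
  intro hθ
  obtain ⟨y, hy, hfy⟩ := hper.exists_mem_Ico hp θ (φ a)
  have hcont : Continuous φ := continuous_iff_continuousAt.2 fun z => (hφ z).continuousAt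
  obtain ⟨z, -, hz⟩ : y ∈ φ '' uIcc a b :=
    intermediate_value_uIcc hcont.continuousOn
      (mem_uIcc.2 (Or.inl ⟨hy.1, by linarith [hy.2]⟩))
  have hφy : φ = fun _ => y :=
    ODE_solution_unique_univ (v := fun _ => f) (s := fun _ => univ) (t₀ := z)
      (fun _ => hf.lipschitzOnWith) (fun t => ⟨hφ t, trivial⟩)
      (fun t => ⟨by simpa [← hfy, hθ] using hasDerivAt_const t y, trivial⟩) hz
  simp only [hφy, sub_self] at hab
  exact hp.ne hab

theorem abs_lt_of_add_mul_cos_ne_zero {A B : ℝ} (h : ∀ θ, A + B * cos θ ≠ 0) (hπ : 0 < A - B) :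
    |B| < A := by
  have hA : 0 < A + B := by
    by_contra! hle
    obtain ⟨θ, hθ⟩ : (0 : ℝ) ∈ range fun θ => A + B * cos θ :=
      intermediate_value_univ 0 π (by fun_prop) ⟨by simpa using hle, by simpa using hπ.le⟩
    exact h θ hθ
  exact abs_lt.2 ⟨by linarith, by linarith⟩

theorem rotating_waves_stmt_12_general (c β g lam : ℝ) (hlam : 0 < lam)
    (φ : ℝ → ℝ) (hφ : Differentiable ℝ φ)
    (hode : ∀ z : ℝ, deriv φ z
      = lam * hTheta β (φ z) + (g / 2) * rhoC c lam * wTheta (φ z))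
    (hper : φ Real.pi - φ (-Real.pi) = 2 * Real.pi) :
    4 * lam ^ 2 * β + 2 * g * lam * rhoC c lam = 1 := by
  set A := lam * (1 + β) + g / 2 * rhoC c lam
  set B := lam * (β - 1) + g / 2 * rhoC c lam
  have hφ' : ∀ z, HasDerivAt φ (A + B * cos (φ z)) z := fun z =>
    (hφ z).hasDerivAt.congr_deriv (by rw [hode z, hTheta, wTheta]; ring)
  have hperiodic : Periodic (fun θ => A + B * cos θ) (2 * π) := fun θ => by
    simp only [cos_add_two_pi]
  have hne : ∀ θ, A + B * cos θ ≠ 0 :=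
    hperiodic.ne_zero_of_hasDerivAt_of_sub_eq
      ((LipschitzWith.const A).add ((lipschitzWith_smul B).comp lipschitzWith_cos))
      two_pi_pos hφ' hper
  have hAB : |B| < A := abs_lt_of_add_mul_cos_ne_zero hne (by linarith)
  have hS : √(A ^ 2 - B ^ 2) = 1 := by
    have hSpos : 0 < √(A ^ 2 - B ^ 2) :=
      sqrt_pos.2 (sub_pos.2 (sq_lt_sq' (abs_lt.1 hAB).1 (abs_lt.1 hAB).2))
    have h := sub_eq_of_hasDerivAt_add_mul_cos hAB hφ' hper
    rw [eq_div_iff hSpos.ne'] at h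
    exact mul_left_cancel₀ two_pi_pos.ne' (by linear_combination h)
  linear_combination sqrt_eq_one.1 hS

/-- Equation (4.5): in the uniform-coupling case `J ≡ 1`, a rotating-wave profile
of the autonomous equation (4.2) satisfying `φ(π) - φ(-π) = 2π` forces
`4λ²β + 2gλρ_c(λ) = 1`. -/
theorem rotating_waves_stmt_12 (c β g lam : ℝ) (hc : 0 ≤ c) (hg : 0 < g) (hlam : 0 < lam)
    (φ : ℝ → ℝ) (hφ : Differentiable ℝ φ)
    (hode : ∀ z : ℝ, deriv φ z
      = lam * hTheta β (φ z) + (g / 2) * rhoC c lam * wTheta (φ z))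
    (hper : φ Real.pi - φ (-Real.pi) = 2 * Real.pi) :
    4 * lam ^ 2 * β + 2 * g * lam * rhoC c lam = 1 :=
  rotating_waves_stmt_12_general c β g lam hlam φ hφ hode hper
end
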